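/- arXiv:2104.13898 — 6 statements merged into one kernel-verified Lean document; each statement's English description precedes it below -/
import Mathlib

section
/- Let G be a simple graph whose edges are 2-colored red and blue such that the blue subgraph G_b contains no copy of K_{1,k} (i.e., every vertex has blue degree at most k-1), and the red subgraph G_r contains no copy of K_t. If S is a set of vertices each of blue degree at most k-2 and S is a clique in G, then every independent set of the blue graph induced on S has size at most t-1, and consequently |S| ≤ (t-1)(k-1). -/
/-- Lemma 2.3(i): in a 2-colored graph with red graph `R` K_t-free and blue graph `G \ R`
K_{1,k}-free, if `S` is a clique in `G` whose vertices all have blue degree ≤ k-2, then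
every blue-independent subset of `S` has at most `t-1` vertices and `|S| ≤ (t-1)(k-1)`. -/
theorem co_critical_small_blue_degree_clique {V : Type*} [Fintype V]
    (G R : SimpleGraph V) (t k : ℕ) (ht : 3 ≤ t) (hk : 3 ≤ k) (hR : R ≤ G)
    (hred : R.CliqueFree t)
    (hblue : ∀ v : V, {w | (G \ R).Adj v w}.ncard ≤ k - 1)
    (S : Finset V)
    (hSdeg : ∀ v ∈ S, {w | (G \ R).Adj v w}.ncard ≤ k - 2)
    (hSclique : G.IsClique (S : Set V)) :
    (∀ I : Finset V, I ⊆ S →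
        (I : Set V).Pairwise (fun a b => ¬ (G \ R).Adj a b) → I.card ≤ t - 1) ∧
      S.card ≤ (t - 1) * (k - 1) := by
  classical
  -- Part 1: any blue-independent subset of S is a red clique, hence has < t vertices.
  have part1 : ∀ I : Finset V, I ⊆ S →
      (I : Set V).Pairwise (fun a b => ¬ (G \ R).Adj a b) → I.card ≤ t - 1 := by
    intro I hIS hInd
    have hredclique : R.IsClique (I : Set V) := by
      intro a ha b hb hab
      have hG : G.Adj a b := hSclique (hIS ha) (hIS hb) hab
      have hnb : ¬ (G \ R).Adj a b := hInd ha hb hab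
      simp only [SimpleGraph.sdiff_adj] at hnb
      by_contra hRab
      exact hnb ⟨hG, hRab⟩
    by_contra h
    push_neg at h
    have hts : t ≤ I.card := by omega
    obtain ⟨J, hJI, hJcard⟩ := Finset.exists_subset_card_eq hts
    exact hred J ⟨hredclique.subset (by exact_mod_cast hJI), hJcard⟩
  refine ⟨part1, ?_⟩
  -- Part 2: take a blue-independent subset I of S of maximal cardinality.
  have hne : (S.powerset.filter
      (fun I : Finset V => (I : Set V).Pairwise (fun a b => ¬ (G \ R).Adj a b))).Nonempty :=
    ⟨∅, by simp⟩
  obtain ⟨I, hImem, hImax⟩ := Finset.exists_max_image _ (Finset.card : Finset V → ℕ) hne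
  simp only [Finset.mem_filter, Finset.mem_powerset] at hImem
  obtain ⟨hIS, hInd⟩ := hImem
  -- Every vertex of S \ I has a blue neighbour in I.
  have hcover : ∀ v ∈ S, v ∉ I → ∃ u ∈ I, (G \ R).Adj u v := by
    intro v hvS hvI
    by_contra hno
    push_neg at hno
    have hmem : insert v I ∈ S.powerset.filter
        (fun I : Finset V => (I : Set V).Pairwise (fun a b => ¬ (G \ R).Adj a b)) := by
      simp only [Finset.mem_filter, Finset.mem_powerset]
      refine ⟨Finset.insert_subset hvS hIS, ?_⟩
      rw [Finset.coe_insert]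
      refine Set.Pairwise.insert hInd ?_
      intro u hu _
      exact ⟨fun h => (hno u hu) h.symm, hno u hu⟩
    have := hImax _ hmem
    rw [Finset.card_insert_of_notMem hvI] at this
    omega
  -- Map each vertex of S to itself (if in I) or to a blue neighbour in I.
  set f : V → V := fun v =>
    if hv : v ∈ I then v
    else if h : ∃ u ∈ I, (G \ R).Adj u v then h.choose else v with hf
  have hmaps : ∀ v ∈ S, f v ∈ I := by
    intro v hv
    by_cases hvI : v ∈ I
    · simp [hf, hvI]
    · have hex : ∃ u ∈ I, (G \ R).Adj u v := hcover v hv hvI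
      simp only [hf, hvI, dif_neg, not_false_iff, hex, dif_pos]
      exact hex.choose_spec.1
  have hfiber : ∀ u ∈ I, (S.filter (fun v => f v = u)).card ≤ k - 1 := by
    intro u _
    have hN : {w | (G \ R).Adj u w}.Finite := Set.toFinite _
    have hsub : S.filter (fun v => f v = u) ⊆ insert u hN.toFinset := by
      intro v hv
      simp only [Finset.mem_filter] at hv
      obtain ⟨hvS, hvf⟩ := hv
      by_cases hvI : v ∈ I
      · simp only [hf, hvI, dif_pos] at hvf
        simp [hvf]
      · have hex : ∃ u ∈ I, (G \ R).Adj u v := hcover v hvS hvI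
        simp only [hf, hvI, dif_neg, not_false_iff, hex, dif_pos] at hvf
        have := hex.choose_spec.2
        rw [hvf] at this
        exact Finset.mem_insert_of_mem (hN.mem_toFinset.2 this)
    calc (S.filter (fun v => f v = u)).card ≤ (insert u hN.toFinset).card :=
          Finset.card_le_card hsub
      _ ≤ hN.toFinset.card + 1 := Finset.card_insert_le _ _
      _ ≤ (k - 2) + 1 := by
          have := hSdeg u (by
            -- u ∈ I ⊆ S
            exact hIS ‹u ∈ I›)
          rw [Set.ncard_eq_toFinset_card _ hN] at this
          omega
      _ ≤ k - 1 := by omega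
  have hScard : S.card ≤ (k - 1) * I.card :=
    Finset.card_le_mul_card_image_of_maps_to hmaps (k - 1) hfiber
  have hIcard : I.card ≤ t - 1 := part1 I hIS hInd
  calc S.card ≤ (k - 1) * I.card := hScard
    _ ≤ (k - 1) * (t - 1) := Nat.mul_le_mul_left _ hIcard
    _ = (t - 1) * (k - 1) := Nat.mul_comm _ _
end

section
/- Let J be the graph on A ∪ B ∪ C ∪ {y,z} as above with both B and C nonempty (A nonempty, all sets pairwise disjoint). Then J is K_3-saturated: J contains no triangle, but adding any missing edge creates a triangle. -/
/-- The graph `J` (with `A`, `B`, `C` nonempty) is `K₃`-saturated: it is triangle-free,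
but adding any missing edge creates a triangle. -/
theorem J_is_K3_saturated {V : Type*} [Fintype V] [DecidableEq V]
    (A B C : Finset V) (y z : V)
    (hA : A.Nonempty) (hB : B.Nonempty) (hC : C.Nonempty)
    (hAB : Disjoint A B) (hAC : Disjoint A C) (hBC : Disjoint B C)
    (hy : y ∉ A ∪ B ∪ C) (hz : z ∉ A ∪ B ∪ C) (hyz : y ≠ z)
    (hcover : ∀ v : V, v ∈ A ∪ B ∪ C ∨ v = y ∨ v = z)
    (J : SimpleGraph V)
    (hJ : ∀ u v : V, J.Adj u v ↔
      ((u = y ∧ v ∈ A ∪ B) ∨ (v = y ∧ u ∈ A ∪ B) ∨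
       (u = z ∧ v ∈ A ∪ C) ∨ (v = z ∧ u ∈ A ∪ C) ∨
       (u ∈ B ∧ v ∈ C) ∨ (u ∈ C ∧ v ∈ B))) :
    J.CliqueFree 3 ∧
      ∀ u v : V, u ≠ v → ¬ J.Adj u v →
        ¬ (J ⊔ SimpleGraph.fromEdgeSet {s(u, v)}).CliqueFree 3 := by
  have hyA : y ∉ A := fun h => hy (by simp [h])
  have hyB : y ∉ B := fun h => hy (by simp [h])
  have hyC : y ∉ C := fun h => hy (by simp [h])
  have hzA : z ∉ A := fun h => hz (by simp [h])
  have hzB : z ∉ B := fun h => hz (by simp [h])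
  have hzC : z ∉ C := fun h => hz (by simp [h])
  have dAB := Finset.disjoint_left.1 hAB
  have dAC := Finset.disjoint_left.1 hAC
  have dBC := Finset.disjoint_left.1 hBC
  -- no edges within A ∪ B
  have noAB : ∀ u v : V, u ∈ A ∪ B → v ∈ A ∪ B → ¬ J.Adj u v := by
    intro u v hu hv hadj
    rcases Finset.mem_union.1 hu with hu' | hu' <;>
      rcases Finset.mem_union.1 hv with hv' | hv' <;>
      rcases (hJ u v).1 hadj with ⟨rfl, h⟩ | ⟨rfl, h⟩ | ⟨rfl, h⟩ | ⟨rfl, h⟩ | ⟨h1, h2⟩ | ⟨h1, h2⟩ <;>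
      first
        | exact hyA hu' | exact hyA hv' | exact hyB hu' | exact hyB hv'
        | exact hzA hu' | exact hzA hv' | exact hzB hu' | exact hzB hv'
        | exact dAC hu' h1 | exact dAC hv' h2 | exact dBC hu' h1 | exact dBC hv' h2
  -- no edges within A ∪ C
  have noAC : ∀ u v : V, u ∈ A ∪ C → v ∈ A ∪ C → ¬ J.Adj u v := by
    intro u v hu hv hadj
    rcases Finset.mem_union.1 hu with hu' | hu' <;>
      rcases Finset.mem_union.1 hv with hv' | hv' <;>
      rcases (hJ u v).1 hadj with ⟨rfl, h⟩ | ⟨rfl, h⟩ | ⟨rfl, h⟩ | ⟨rfl, h⟩ | ⟨h1, h2⟩ | ⟨h1, h2⟩ <;>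
      first
        | exact hyA hu' | exact hyA hv' | exact hyC hu' | exact hyC hv'
        | exact hzA hu' | exact hzA hv' | exact hzC hu' | exact hzC hv'
        | exact dAB hu' h1 | exact dAB hv' h2 | exact dBC h1 hu' | exact dBC h2 hv'
  -- neighbours of y lie in A ∪ B
  have nbr_y : ∀ v : V, J.Adj y v → v ∈ A ∪ B := by
    intro v hadj
    rcases (hJ y v).1 hadj with ⟨_, h⟩ | ⟨rfl, h⟩ | ⟨h', h⟩ | ⟨rfl, h⟩ | ⟨h1, h2⟩ | ⟨h1, h2⟩
    · exact h
    · exact absurd h (by simp [hyA, hyB])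
    · exact absurd h' hyz
    · exact absurd h (by simp [hyA, hyC])
    · exact absurd h1 hyB
    · exact absurd h1 hyC
  -- neighbours of z lie in A ∪ C
  have nbr_z : ∀ v : V, J.Adj z v → v ∈ A ∪ C := by
    intro v hadj
    rcases (hJ z v).1 hadj with ⟨h', h⟩ | ⟨rfl, h⟩ | ⟨_, h⟩ | ⟨rfl, h⟩ | ⟨h1, h2⟩ | ⟨h1, h2⟩
    · exact absurd h' hyz.symm
    · exact absurd h (by simp [hzA, hzB])
    · exact h
    · exact absurd h (by simp [hzA, hzC])
    · exact absurd h1 hzB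
    · exact absurd h1 hzC
  have no_triangle : ∀ a b c : V, J.Adj a b → J.Adj a c → J.Adj b c → False := by
    intro a b c hab hac hbc
    rcases (hJ a b).1 hab with ⟨rfl, hb'⟩ | ⟨rfl, ha'⟩ | ⟨rfl, hb'⟩ | ⟨rfl, ha'⟩ | ⟨ha', hb'⟩ | ⟨ha', hb'⟩
    · exact noAB b c hb' (nbr_y c hac) hbc
    · exact noAB a c ha' (nbr_y c hbc) hac
    · exact noAC b c hb' (nbr_z c hac) hbc
    · exact noAC a c ha' (nbr_z c hbc) hac
    · -- a ∈ B, b ∈ C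
      rcases (hJ a c).1 hac with ⟨rfl, h⟩ | ⟨rfl, h⟩ | ⟨rfl, h⟩ | ⟨rfl, h⟩ | ⟨h1, h2⟩ | ⟨h1, h2⟩
      · exact hyB ha'
      · exact absurd (nbr_y b hbc.symm)
          (fun h => (Finset.mem_union.1 h).elim (fun h' => dAC h' hb') (fun h' => dBC h' hb'))
      · exact hzB ha'
      · rcases Finset.mem_union.1 h with h' | h'
        · exact dAB h' ha'
        · exact dBC ha' h'
      · exact noAC b c (Finset.mem_union_right _ hb') (Finset.mem_union_right _ h2) hbc
      · exact dBC ha' h1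
    · -- a ∈ C, b ∈ B
      rcases (hJ a c).1 hac with ⟨rfl, h⟩ | ⟨rfl, h⟩ | ⟨rfl, h⟩ | ⟨rfl, h⟩ | ⟨h1, h2⟩ | ⟨h1, h2⟩
      · exact hyC ha'
      · rcases Finset.mem_union.1 h with h' | h'
        · exact dAC h' ha'
        · exact dBC h' ha'
      · exact hzC ha'
      · exact absurd (nbr_z b hbc.symm)
          (fun h => (Finset.mem_union.1 h).elim (fun h' => dAB h' hb') (fun h' => dBC hb' h'))
      · exact dBC h1 ha'
      · exact noAB b c (Finset.mem_union_right _ hb') (Finset.mem_union_right _ h2) hbc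
  constructor
  · intro t ht
    rw [SimpleGraph.is3Clique_iff] at ht
    obtain ⟨a, b, c, hab, hac, hbc, rfl⟩ := ht
    exact no_triangle a b c hab hac hbc
  · intro u v hne hnadj hfree
    -- a common triangle constructor
    have key : ∀ w : V, J.Adj w u → J.Adj w v → False := by
      intro w h1 h2
      apply hfree {u, v, w}
      rw [SimpleGraph.is3Clique_triple_iff]
      refine ⟨Or.inr ?_, Or.inl h1.symm, Or.inl h2.symm⟩
      simp [SimpleGraph.fromEdgeSet_adj, hne]
    obtain ⟨a, ha⟩ := hA
    obtain ⟨b, hb⟩ := hB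
    obtain ⟨c, hc⟩ := hC
    have adj : ∀ p q : V,
        ((p = y ∧ q ∈ A ∪ B) ∨ (q = y ∧ p ∈ A ∪ B) ∨
         (p = z ∧ q ∈ A ∪ C) ∨ (q = z ∧ p ∈ A ∪ C) ∨
         (p ∈ B ∧ q ∈ C) ∨ (p ∈ C ∧ q ∈ B)) → J.Adj p q := fun p q h => (hJ p q).2 h
    rcases hcover u with hu | rfl | rfl
    · rcases Finset.mem_union.1 hu with hu' | hu'
      · rcases Finset.mem_union.1 hu' with hu'' | hu''
        · -- u ∈ A
          rcases hcover v with hv | rfl | rfl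
          · rcases Finset.mem_union.1 hv with hv' | hv'
            · rcases Finset.mem_union.1 hv' with hv'' | hv''
              · exact key y (adj _ _ (by simp [hu''])) (adj _ _ (by simp [hv'']))
              · exact key y (adj _ _ (by simp [hu''])) (adj _ _ (by simp [hv'']))
            · exact key z (adj _ _ (by simp [hu''])) (adj _ _ (by simp [hv']))
          · exact hnadj (adj _ _ (by simp [hu'']))
          · exact hnadj (adj _ _ (by simp [hu'']))
        · -- u ∈ B
          rcases hcover v with hv | rfl | rfl
          · rcases Finset.mem_union.1 hv with hv' | hv'
            · rcases Finset.mem_union.1 hv' with hv'' | hv''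
              · exact key y (adj _ _ (by simp [hu''])) (adj _ _ (by simp [hv'']))
              · exact key c (adj _ _ (by simp [hu'', hc])) (adj _ _ (by simp [hv'', hc]))
            · exact hnadj (adj _ _ (by simp [hu'', hv']))
          · exact hnadj (adj _ _ (by simp [hu'']))
          · exact key c (adj _ _ (by simp [hu'', hc])) (adj _ _ (by simp [hc]))
      · -- u ∈ C
        rcases hcover v with hv | rfl | rfl
        · rcases Finset.mem_union.1 hv with hv' | hv'
          · rcases Finset.mem_union.1 hv' with hv'' | hv''
            · exact key z (adj _ _ (by simp [hu'])) (adj _ _ (by simp [hv'']))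
            · exact hnadj (adj _ _ (by simp [hu', hv'']))
          · exact key b (adj _ _ (by simp [hu', hb])) (adj _ _ (by simp [hv', hb]))
        · exact key b (adj _ _ (by simp [hu', hb])) (adj _ _ (by simp [hb]))
        · exact hnadj (adj _ _ (by simp [hu']))
    · -- u = y
      rcases hcover v with hv | rfl | rfl
      · rcases Finset.mem_union.1 hv with hv' | hv'
        · exact hnadj (adj _ _ (by simp [hv']))
        · exact key b (adj _ _ (by simp [hb])) (adj _ _ (by simp [hv', hb]))
      · exact hne rfl
      · exact key a (adj _ _ (by simp [ha])) (adj _ _ (by simp [ha]))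
    · -- u = z
      rcases hcover v with hv | rfl | rfl
      · rcases Finset.mem_union.1 hv with hv' | hv'
        · rcases Finset.mem_union.1 hv' with hv'' | hv''
          · exact hnadj (adj _ _ (by simp [hv'']))
          · exact key c (adj _ _ (by simp [hc])) (adj _ _ (by simp [hv'', hc]))
        · exact hnadj (adj _ _ (by simp [hv']))
      · exact key a (adj _ _ (by simp [ha])) (adj _ _ (by simp [ha]))
      · exact hne rfl
end

section
/- Let G be a K_t-saturated graph on n vertices. Then either G has a vertex adjacent to all other vertices (maximum degree n-1), or the minimum degree of G is at least 2(t-2). -/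
open Finset

namespace HajnalAux

variable {V : Type*} [Fintype V] [DecidableEq V] (G : SimpleGraph V) [DecidableRel G.Adj]

/-- The set of vertices in `N(v)` outside a clique `S ⊆ N(v)` that have a non-neighbor in `S`. -/
def Tset (v : V) (S : Finset V) : Finset V :=
  (G.neighborFinset v).filter (fun b => b ∉ S ∧ ∃ a ∈ S, ¬ G.Adj a b)

lemma mem_Tset {v : V} {S : Finset V} {b : V} :
    b ∈ Tset G v S ↔ G.Adj v b ∧ b ∉ S ∧ ∃ a ∈ S, ¬ G.Adj a b := by
  simp [Tset, SimpleGraph.mem_neighborFinset]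

variable {G}

/-- Cliques inside a neighborhood have at most `k` vertices when all cliques have `≤ k+1`. -/
lemma clique_in_nbhd_card_le {k : ℕ}
    (hclique : ∀ W : Finset V, G.IsClique (W : Set V) → W.card ≤ k + 1)
    (v : V) (W : Finset V) (hW : G.IsClique (W : Set V)) (hWB : W ⊆ G.neighborFinset v) :
    W.card ≤ k := by
  have hv : v ∉ W := by
    intro hv
    exact G.irrefl ((G.mem_neighborFinset v v).1 (hWB hv))
  have hins : G.IsClique ((insert v W : Finset V) : Set V) := by
    rw [coe_insert]
    exact hW.insert (fun b hb _ => (G.mem_neighborFinset v b).1 (hWB hb))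
  have := hclique _ hins
  rwa [card_insert_of_notMem hv, Nat.add_le_add_iff_right] at this

/-- Main lemma (Hajnal): for every nonempty clique `S ⊆ N(v)`,
there are at least `|S|` vertices of `N(v) \ S` having a non-neighbor in `S`. -/
lemma main_H {k : ℕ}
    (hclique : ∀ W : Finset V, G.IsClique (W : Set V) → W.card ≤ k + 1)
    (hsat' : ∀ u v : V, u ≠ v → ¬ G.Adj u v →
        ∃ C : Finset V, C.card = k ∧ G.IsClique (C : Set V) ∧ ∀ x ∈ C, G.Adj u x ∧ G.Adj v x)
    (hnc : ∀ x : V, ∃ y, y ≠ x ∧ ¬ G.Adj x y) :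
    ∀ (s : ℕ) (v : V) (S : Finset V), G.IsClique (S : Set V) → S ⊆ G.neighborFinset v →
      S.Nonempty → S.card = s → s ≤ (Tset G v S).card := by
  intro s
  induction s using Nat.strong_induction_on with
  | _ s IH =>
  intro v S hScl hSB hSne hScard
  by_contra hT
  push_neg at hT
  -- hT : (Tset G v S).card < s
  -- Fact (II): a vertex of N(v) outside `Tset` and `≠ a` is adjacent to each `a ∈ S`.
  have hII : ∀ a ∈ S, ∀ x : V, G.Adj v x → x ∉ Tset G v S → x ≠ a → G.Adj a x := by
    intro a ha x hvx hxT hxa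
    by_contra hnadj
    by_cases hxS : x ∈ S
    · exact hnadj (hScl (mem_coe.2 ha) (mem_coe.2 hxS) (fun h => hxa h.symm))
    · exact hxT (mem_Tset G |>.2 ⟨hvx, hxS, a, ha, hnadj⟩)
  -- Fact (IV): expansion of unions of non-neighborhoods, by induction hypothesis.
  have hIV : ∀ T' ⊆ Tset G v S, T'.Nonempty →
      T'.card + 1 ≤ (S.filter (fun a => ∃ b ∈ T', ¬ G.Adj a b)).card := by
    intro T' hT'sub hT'ne
    set U := S.filter (fun a => ∃ b ∈ T', ¬ G.Adj a b) with hU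
    have hUS : U ⊆ S := filter_subset _ _
    have hUne : U.Nonempty := by
      obtain ⟨b, hb⟩ := hT'ne
      obtain ⟨-, -, a, haS, hnadj⟩ := (mem_Tset G).1 (hT'sub hb)
      exact ⟨a, mem_filter.2 ⟨haS, b, hb, hnadj⟩⟩
    by_cases hSU : S ⊆ U
    · have hUeq : U = S := Subset.antisymm hUS hSU
      have h1 : T'.card ≤ (Tset G v S).card := card_le_card hT'sub
      have h2 : U.card = s := by rw [hUeq, hScard]
      omega
    · have hS'ne : (S \ U).Nonempty := by
        rw [not_subset] at hSU
        obtain ⟨a, haS, haU⟩ := hSU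
        exact ⟨a, mem_sdiff.2 ⟨haS, haU⟩⟩
      have hS'cl : G.IsClique ((S \ U : Finset V) : Set V) :=
        hScl.subset (by rw [coe_sdiff]; exact Set.diff_subset)
      have hS'B : S \ U ⊆ G.neighborFinset v := (sdiff_subset).trans hSB
      have hcards : (S \ U).card + U.card = s := by
        rw [card_sdiff_add_card_eq_card hUS, hScard]
      have hS'lt : (S \ U).card < s := by
        have := card_pos.2 hUne
        omega
      have hIHres := IH (S \ U).card hS'lt v (S \ U) hS'cl hS'B hS'ne rfl
      -- Tset of S\U is contained in (Tset S) \ T'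
      have hsub : Tset G v (S \ U) ⊆ (Tset G v S) \ T' := by
        intro x hx
        obtain ⟨hvx, hxS', a', ha', hnadj⟩ := (mem_Tset G).1 hx
        obtain ⟨ha'S, ha'U⟩ := mem_sdiff.1 ha'
        have hxa' : x ≠ a' := by
          intro h; exact hxS' (h ▸ ha')
        have hxS : x ∉ S := by
          intro hxS
          exact hnadj (hScl (mem_coe.2 ha'S) (mem_coe.2 hxS) (fun h => hxa' h.symm))
        refine mem_sdiff.2 ⟨(mem_Tset G).2 ⟨hvx, hxS, a', ha'S, hnadj⟩, ?_⟩
        intro hxT'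
        exact ha'U (mem_filter.2 ⟨ha'S, x, hxT', hnadj⟩)
      have h3 : (S \ U).card ≤ ((Tset G v S) \ T').card := le_trans hIHres (card_le_card hsub)
      have h4 : ((Tset G v S) \ T').card + T'.card = (Tset G v S).card :=
        card_sdiff_add_card_eq_card hT'sub
      omega
  -- Fact (III): against any k-clique in N(v).
  have hIII : ∀ A' : Finset V, G.IsClique (A' : Set V) → A' ⊆ G.neighborFinset v →
      A'.card = k → (S \ A').card ≤ (A' ∩ Tset G v S).card := by
    intro A' hA'cl hA'B hA'card
    set W := (A' \ Tset G v S) ∪ S with hW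
    have hWcl : G.IsClique (W : Set V) := by
      intro x hx y hy hxy
      rw [mem_coe, hW, mem_union] at hx hy
      rcases hx with hx | hx <;> rcases hy with hy | hy
      · exact hA'cl (mem_coe.2 (sdiff_subset hx)) (mem_coe.2 (sdiff_subset hy)) hxy
      · obtain ⟨hxA, hxT⟩ := mem_sdiff.1 hx
        exact (hII y hy x ((G.mem_neighborFinset v x).1 (hA'B hxA)) hxT
          (fun h => hxy h)).symm
      · obtain ⟨hyA, hyT⟩ := mem_sdiff.1 hy
        exact hII x hx y ((G.mem_neighborFinset v y).1 (hA'B hyA)) hyT (fun h => hxy h.symm)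
      · exact hScl (mem_coe.2 hx) (mem_coe.2 hy) hxy
    have hWB : W ⊆ G.neighborFinset v := union_subset ((sdiff_subset).trans hA'B) hSB
    have h1 : W.card ≤ k := clique_in_nbhd_card_le hclique v W hWcl hWB
    have hdisj : Disjoint (A' \ Tset G v S) (S \ A') := by
      rw [disjoint_left]
      intro x hx hx'
      exact (mem_sdiff.1 hx').2 (mem_sdiff.1 hx).1
    have h2 : (A' \ Tset G v S).card + (S \ A').card ≤ W.card := by
      rw [← card_union_of_disjoint hdisj]
      apply card_le_card
      apply union_subset
      · exact subset_union_left
      · exact (sdiff_subset).trans subset_union_right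
    have h3 : (A' ∩ Tset G v S).card + (A' \ Tset G v S).card = k := by
      rw [card_inter_add_card_sdiff, hA'card]
    omega
  -- Fact (V): every non-neighbor of v is adjacent to all of S.
  have hV : ∀ z : V, z ≠ v → ¬ G.Adj v z → ∀ a ∈ S, G.Adj z a := by
    intro z hzv hzadj a ha
    by_contra hza
    obtain ⟨C, hCcard, hCcl, hCadj⟩ := hsat' v z (fun h => hzv h.symm) hzadj
    have hCB : C ⊆ G.neighborFinset v := fun x hx =>
      (G.mem_neighborFinset v x).2 (hCadj x hx).1
    have hIII' := hIII C hCcl hCB hCcard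
    have ha0 : a ∈ S \ C := mem_sdiff.2 ⟨ha, fun hc => hza ((hCadj a hc).2)⟩
    have hpos : 1 ≤ (S \ C).card := card_pos.2 ⟨a, ha0⟩
    have hTne : (C ∩ Tset G v S).Nonempty := by
      rw [← card_pos]; omega
    have hIV' := hIV (C ∩ Tset G v S) inter_subset_right hTne
    have hsub : S.filter (fun a => ∃ b ∈ C ∩ Tset G v S, ¬ G.Adj a b) ⊆ S \ C := by
      intro x hx
      obtain ⟨hxS, b, hb, hnadj⟩ := mem_filter.1 hx
      obtain ⟨hbC, hbT⟩ := mem_inter.1 hb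
      refine mem_sdiff.2 ⟨hxS, fun hxC => ?_⟩
      have hbS : b ∉ S := ((mem_Tset G).1 hbT).2.1
      exact hnadj (hCcl (mem_coe.2 hxC) (mem_coe.2 hbC) (fun h => hbS (h ▸ hxS)))
    have := card_le_card hsub
    omega
  -- conclude: T is nonempty (else S's element would be a cone vertex)
  obtain ⟨a1, ha1⟩ := hSne
  by_cases hTe : (Tset G v S).Nonempty
  · obtain ⟨b, hb⟩ := hTe
    obtain ⟨hbB, hbS, a, haS, hnadj⟩ := (mem_Tset G).1 hb
    have hab : a ≠ b := fun h => hbS (h ▸ haS)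
    obtain ⟨C, hCcard, hCcl, hCadj⟩ := hsat' a b hab hnadj
    -- W := (C \ T) ∪ S is a clique
    set W := (C \ Tset G v S) ∪ S with hW
    have hWcl : G.IsClique (W : Set V) := by
      have key : ∀ x ∈ C \ Tset G v S, ∀ y ∈ S, x ≠ y → G.Adj y x := by
        intro x hx y hy hxy
        obtain ⟨hxC, hxT⟩ := mem_sdiff.1 hx
        by_cases hxv : x = v
        · subst hxv
          exact ((G.mem_neighborFinset x y).1 (hSB hy)).symm
        · by_cases hxB : G.Adj v x
          · exact hII y hy x hxB hxT hxy
          · exact (hV x hxv hxB y hy).symm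
      intro x hx y hy hxy
      rw [mem_coe, hW, mem_union] at hx hy
      rcases hx with hx | hx <;> rcases hy with hy | hy
      · exact hCcl (mem_coe.2 (sdiff_subset hx)) (mem_coe.2 (sdiff_subset hy)) hxy
      · exact (key x hx y hy hxy).symm
      · exact key y hy x hx (fun h => hxy h.symm)
      · exact hScl (mem_coe.2 hx) (mem_coe.2 hy) hxy
    have h1 : W.card ≤ k + 1 := hclique W hWcl
    have hdisj : Disjoint (C \ Tset G v S) (S \ C) := by
      rw [disjoint_left]
      intro x hx hx'
      exact (mem_sdiff.1 hx').2 (mem_sdiff.1 hx).1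
    have h2 : (C \ Tset G v S).card + (S \ C).card ≤ W.card := by
      rw [← card_union_of_disjoint hdisj]
      apply card_le_card
      apply union_subset
      · exact subset_union_left
      · exact (sdiff_subset).trans subset_union_right
    have h3 : (C ∩ Tset G v S).card + (C \ Tset G v S).card = k := by
      rw [card_inter_add_card_sdiff, hCcard]
    -- apply (IV) to T' = insert b (C ∩ T)
    have hbC : b ∉ C := by
      intro hbC
      exact G.irrefl (hCadj b hbC).2
    have hT'sub : insert b (C ∩ Tset G v S) ⊆ Tset G v S :=
      insert_subset hb inter_subset_right
    have hT'card : (insert b (C ∩ Tset G v S)).card = (C ∩ Tset G v S).card + 1 :=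
      card_insert_of_notMem (fun h => hbC (mem_inter.1 h).1)
    have hIV' := hIV (insert b (C ∩ Tset G v S)) hT'sub (insert_nonempty _ _)
    have hsub : S.filter (fun x => ∃ c ∈ insert b (C ∩ Tset G v S), ¬ G.Adj x c) ⊆ S \ C := by
      intro x hx
      obtain ⟨hxS, c, hc, hnadjx⟩ := mem_filter.1 hx
      refine mem_sdiff.2 ⟨hxS, fun hxC => ?_⟩
      rcases mem_insert.1 hc with hcb | hcCT
      · subst hcb
        exact hnadjx ((hCadj x hxC).2.symm)
      · obtain ⟨hcC, hcT⟩ := mem_inter.1 hcCT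
        have hcS : c ∉ S := ((mem_Tset G).1 hcT).2.1
        exact hnadjx (hCcl (mem_coe.2 hxC) (mem_coe.2 hcC) (fun h => hcS (h ▸ hxS)))
    have h4 := card_le_card hsub
    omega
  · -- T empty: a1 is a cone vertex, contradiction
    rw [not_nonempty_iff_eq_empty] at hTe
    obtain ⟨w, hwne, hwnadj⟩ := hnc a1
    have hva1 : G.Adj v a1 := (G.mem_neighborFinset v a1).1 (hSB ha1)
    by_cases hwv : w = v
    · exact hwnadj (hwv ▸ hva1.symm)
    · by_cases hwB : G.Adj v w
      · have : w ∉ Tset G v S := by rw [hTe]; exact notMem_empty w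
        exact hwnadj (hII a1 ha1 w hwB this hwne)
      · exact hwnadj (hV w hwv hwB a1 ha1).symm

/-- Core bound: minimum degree at least `2k` in a cone-free setting. -/
lemma core {k : ℕ} (hk : 1 ≤ k)
    (hclique : ∀ W : Finset V, G.IsClique (W : Set V) → W.card ≤ k + 1)
    (hsat' : ∀ u v : V, u ≠ v → ¬ G.Adj u v →
        ∃ C : Finset V, C.card = k ∧ G.IsClique (C : Set V) ∧ ∀ x ∈ C, G.Adj u x ∧ G.Adj v x)
    (hnc : ∀ x : V, ∃ y, y ≠ x ∧ ¬ G.Adj x y) (v : V) :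
    2 * k ≤ G.degree v := by
  obtain ⟨u, hune, hunadj⟩ := hnc v
  obtain ⟨A, hAcard, hAcl, hAadj⟩ := hsat' v u (fun h => hune h.symm) hunadj
  have hAB : A ⊆ G.neighborFinset v := fun x hx =>
    (G.mem_neighborFinset v x).2 (hAadj x hx).1
  have hAne : A.Nonempty := by
    rw [← card_pos, hAcard]; omega
  have hH := main_H hclique hsat' hnc A.card v A hAcl hAB hAne rfl
  have hdisj : Disjoint A (Tset G v A) := by
    rw [disjoint_right]
    intro x hx
    exact ((mem_Tset G).1 hx).2.1
  have hsub : A ∪ Tset G v A ⊆ G.neighborFinset v := by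
    apply union_subset hAB
    intro x hx
    exact (G.mem_neighborFinset v x).2 ((mem_Tset G).1 hx).1
  have := card_le_card hsub
  rw [card_union_of_disjoint hdisj] at this
  rw [← G.card_neighborFinset_eq_degree]
  omega

end HajnalAux

/-- Extract a common-neighborhood clique from the saturation hypothesis. -/
lemma hajnal_sat_clique {V : Type*} [Fintype V] [DecidableEq V]
    {t : ℕ} {G : SimpleGraph V} [DecidableRel G.Adj]
    (hfree : G.CliqueFree t)
    (hsat : ∀ u v : V, u ≠ v → ¬ G.Adj u v →
      ¬ (G ⊔ SimpleGraph.fromEdgeSet {s(u, v)}).CliqueFree t)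
    (u v : V) (hne : u ≠ v) (hnadj : ¬ G.Adj u v) :
    ∃ C : Finset V, C.card = t - 2 ∧ G.IsClique (C : Set V) ∧
      ∀ x ∈ C, G.Adj u x ∧ G.Adj v x := by
  have h := hsat u v hne hnadj
  rw [SimpleGraph.CliqueFree] at h
  push_neg at h
  obtain ⟨s, hscl, hscard⟩ := h
  have hadj' : ∀ x y : V, (G ⊔ SimpleGraph.fromEdgeSet {s(u, v)}).Adj x y ↔
      G.Adj x y ∨ (x = u ∧ y = v) ∨ (x = v ∧ y = u) := by
    intro x y
    rw [SimpleGraph.sup_adj, SimpleGraph.fromEdgeSet_adj]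
    constructor
    · rintro (h | ⟨h, hne'⟩)
      · exact Or.inl h
      · rw [Set.mem_singleton_iff, Sym2.eq_iff] at h
        exact Or.inr h
    · rintro (h | h)
      · exact Or.inl h
      · refine Or.inr ⟨Set.mem_singleton_iff.2 (Sym2.eq_iff.2 h), ?_⟩
        rcases h with ⟨rfl, rfl⟩ | ⟨rfl, rfl⟩
        · exact hne
        · exact fun hh => hne hh.symm
  have hus : u ∈ s := by
    by_contra hu
    apply hfree s
    refine ⟨?_, hscard⟩
    intro x hx y hy hxy
    have := hscl hx hy hxy
    rw [hadj'] at this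
    rcases this with h | ⟨rfl, rfl⟩ | ⟨rfl, rfl⟩
    · exact h
    · exact absurd hx (by simpa using hu)
    · exact absurd hy (by simpa using hu)
  have hvs : v ∈ s := by
    by_contra hv
    apply hfree s
    refine ⟨?_, hscard⟩
    intro x hx y hy hxy
    have := hscl hx hy hxy
    rw [hadj'] at this
    rcases this with h | ⟨rfl, rfl⟩ | ⟨rfl, rfl⟩
    · exact h
    · exact absurd hy (by simpa using hv)
    · exact absurd hx (by simpa using hv)
  refine ⟨(s.erase u).erase v, ?_, ?_, ?_⟩
  · rw [Finset.card_erase_of_mem (Finset.mem_erase.2 ⟨fun h => hne h.symm, hvs⟩),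
      Finset.card_erase_of_mem hus, hscard]
    omega
  · intro x hx y hy hxy
    rw [Finset.mem_coe, Finset.mem_erase] at hx hy
    have hxv := hx.1
    have hxu' := (Finset.mem_erase.1 hx.2).1
    have hxs := (Finset.mem_erase.1 hx.2).2
    have hyv := hy.1
    have hyu' := (Finset.mem_erase.1 hy.2).1
    have hys := (Finset.mem_erase.1 hy.2).2
    have := hscl (Finset.mem_coe.2 hxs) (Finset.mem_coe.2 hys) hxy
    rw [hadj'] at this
    rcases this with h | ⟨rfl, rfl⟩ | ⟨rfl, rfl⟩
    · exact h
    · exact absurd rfl hxu'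
    · exact absurd rfl hxv
  · intro x hx
    rw [Finset.mem_erase] at hx
    have hxv := hx.1
    have hxu := (Finset.mem_erase.1 hx.2).1
    have hxs := (Finset.mem_erase.1 hx.2).2
    constructor
    · have := hscl (Finset.mem_coe.2 hus) (Finset.mem_coe.2 hxs) (fun h => hxu h.symm)
      rw [hadj'] at this
      rcases this with h | ⟨_, rfl⟩ | ⟨h', _⟩
      · exact h
      · exact absurd rfl hxv
      · exact absurd h' hne
    · have := hscl (Finset.mem_coe.2 hvs) (Finset.mem_coe.2 hxs) (fun h => hxv h.symm)
      rw [hadj'] at this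
      rcases this with h | ⟨h', _⟩ | ⟨_, rfl⟩
      · exact h
      · exact absurd h' (fun hh => hne hh.symm)
      · exact absurd rfl hxu

/-- Hajnal's theorem: a `K_t`-saturated graph on `n` vertices has a vertex of degree `n-1`
or minimum degree at least `2(t-2)`. -/
theorem hajnal_saturated_min_degree {V : Type*} [Fintype V] [DecidableEq V]
    (t : ℕ) (G : SimpleGraph V) [DecidableRel G.Adj]
    (hfree : G.CliqueFree t)
    (hsat : ∀ u v : V, u ≠ v → ¬ G.Adj u v →
      ¬ (G ⊔ SimpleGraph.fromEdgeSet {s(u, v)}).CliqueFree t) :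
    (∃ v : V, G.degree v = Fintype.card V - 1) ∨ (∀ v : V, 2 * (t - 2) ≤ G.degree v) := by
  by_cases hcone : ∃ x : V, ∀ y : V, y ≠ x → G.Adj x y
  · left
    obtain ⟨x, hx⟩ := hcone
    refine ⟨x, ?_⟩
    have hnb : G.neighborFinset x = Finset.univ.erase x := by
      ext y
      rw [SimpleGraph.mem_neighborFinset, Finset.mem_erase]
      constructor
      · intro h
        exact ⟨h.ne', Finset.mem_univ y⟩
      · intro h
        exact hx y h.1
    rw [← G.card_neighborFinset_eq_degree, hnb,
      Finset.card_erase_of_mem (Finset.mem_univ x), Finset.card_univ]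
  · right
    push_neg at hcone
    intro v
    rcases Nat.lt_or_ge t 3 with ht | ht
    · have h0 : t - 2 = 0 := by omega
      rw [h0]
      simp
    · have hclique : ∀ W : Finset V, G.IsClique (W : Set V) → W.card ≤ (t - 2) + 1 := by
        intro W hW
        by_contra hcard
        push_neg at hcard
        have hle : t ≤ W.card := by omega
        obtain ⟨W', hW'sub, hW'card⟩ := Finset.exists_subset_card_eq hle
        exact hfree W' ⟨hW.subset (Finset.coe_subset.2 hW'sub), hW'card⟩
      have hsat' : ∀ u v : V, u ≠ v → ¬ G.Adj u v →
          ∃ C : Finset V, C.card = t - 2 ∧ G.IsClique (C : Set V) ∧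
            ∀ x ∈ C, G.Adj u x ∧ G.Adj v x :=
        fun u v h1 h2 => hajnal_sat_clique hfree hsat u v h1 h2
      exact HajnalAux.core (by omega) hclique hsat' hcone v
end

section
/- Let G be a graph on n vertices with a red/blue edge coloring such that the blue subgraph G_b has maximum degree at most 2, and such that the set S of vertices of blue degree at most 1 forms a clique in G in which every independent set of the blue graph induced on S has at most 2 vertices. Then e(G_b) ≥ n - 2. -/
/-- Claim 1 in the proof of Theorem 1.7: if the blue graph `G_b ≤ G` has maximum degree at
most 2 and the set `S` of vertices of blue degree at most 1 is a clique in `G` with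
`α(G_b[S]) ≤ 2`, then `e(G_b) ≥ n - 2`. -/
theorem blue_edges_at_least_n_sub_two {V : Type*} [Fintype V]
    (G Gb : SimpleGraph V) (hb : Gb ≤ G)
    (hdeg : ∀ v : V, {w | Gb.Adj v w}.ncard ≤ 2)
    (hclique : G.IsClique {v : V | {w | Gb.Adj v w}.ncard ≤ 1})
    (hindep : ∀ I : Set V, I ⊆ {v : V | {w | Gb.Adj v w}.ncard ≤ 1} →
      I.Pairwise (fun a b => ¬ Gb.Adj a b) → I.ncard ≤ 2) :
    Fintype.card V - 2 ≤ Set.ncard Gb.edgeSet := by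
  classical
  -- translate ncard of neighbor sets to degrees
  have hnc : ∀ v : V, {w | Gb.Adj v w}.ncard = Gb.degree v := by
    intro v
    rw [show {w | Gb.Adj v w} = ↑(Gb.neighborFinset v) by simp [SimpleGraph.neighborFinset]; rfl,
      Set.ncard_coe_finset]
    rfl
  -- the set S of low-degree vertices, and Z of degree-0 vertices, as finsets
  set Sf : Finset V := Finset.univ.filter (fun v => Gb.degree v ≤ 1) with hSf
  set Zf : Finset V := Finset.univ.filter (fun v => Gb.degree v = 0) with hZf
  have hZS : Zf ⊆ Sf := by
    intro v hv
    simp only [hZf, hSf, Finset.mem_filter, Finset.mem_univ, true_and] at hv ⊢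
    omega
  -- unique neighbor for vertices in S
  have huniq : ∀ v ∈ Sf, ∀ a b : V, Gb.Adj v a → Gb.Adj v b → a = b := by
    intro v hv a b ha hb
    simp only [hSf, Finset.mem_filter, Finset.mem_univ, true_and] at hv
    have : (Gb.neighborFinset v).card ≤ 1 := hv
    exact Finset.card_le_one.mp this a (by simpa using ha) b (by simpa using hb)
  -- a linear "order" via equiv to Fin
  let f : V → Fin (Fintype.card V) := Fintype.equivFin V
  have hfinj : Function.Injective f := (Fintype.equivFin V).injective
  -- the independent set
  set If : Finset V := Sf.filter (fun v => ∀ w ∈ Sf, Gb.Adj v w → f v < f w) with hIf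
  have hIS : If ⊆ Sf := Finset.filter_subset _ _
  have hZI : Zf ⊆ If := by
    intro v hv
    have hv0 : Gb.degree v = 0 := by
      simpa [hZf] using hv
    simp only [hIf, Finset.mem_filter]
    refine ⟨hZS hv, fun w hw hadj => ?_⟩
    exfalso
    have : w ∈ Gb.neighborFinset v := by simpa using hadj
    rw [Finset.card_eq_zero.mp hv0] at this
    exact absurd this (Finset.notMem_empty w)
  -- I is independent; |I| ≤ 2
  have hIcard : If.card ≤ 2 := by
    have := hindep (↑If) ?_ ?_
    · simpa [Set.ncard_coe_finset] using this
    · intro v hv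
      have := hIS (by simpa using hv)
      simp only [hSf, Finset.mem_filter, Finset.mem_univ, true_and] at this
      simp only [Set.mem_setOf_eq, hnc]
      exact this
    · intro a ha b hb hne hadj
      simp only [Finset.coe_filter, Set.mem_setOf_eq, hIf] at ha hb
      have h1 := ha.2 b (hb.1) hadj
      have h2 := hb.2 a (ha.1) hadj.symm
      exact absurd h2 (not_lt.mpr (le_of_lt h1))
  -- injection from Sf \ If into If \ Zf
  have hcard1 : (Sf \ If).card ≤ (If \ Zf).card := by
    have hex : ∀ v ∈ Sf \ If, ∃ w, w ∈ If \ Zf ∧ Gb.Adj w v := by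
      intro v hv
      rw [Finset.mem_sdiff] at hv
      obtain ⟨hvS, hvI⟩ := hv
      simp only [hIf, Finset.mem_filter, not_and, not_forall] at hvI
      obtain ⟨w, hwS, hadj, hlt⟩ := hvI hvS
      refine ⟨w, ?_, hadj.symm⟩
      rw [Finset.mem_sdiff]
      constructor
      · simp only [hIf, Finset.mem_filter]
        refine ⟨hwS, fun u hu hadju => ?_⟩
        have : u = v := huniq w hwS u v hadju hadj.symm
        subst this
        have hne : f w ≠ f u := fun h => (Gb.ne_of_adj hadj.symm) (hfinj h)
        omega
      · simp only [hZf, Finset.mem_filter, Finset.mem_univ, true_and]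
        intro h0
        have : v ∈ Gb.neighborFinset w := by simpa using hadj.symm
        rw [Finset.card_eq_zero.mp h0] at this
        exact absurd this (Finset.notMem_empty v)
    choose g hg1 hg2 using hex
    apply Finset.card_le_card_of_injOn (fun v => if h : v ∈ Sf \ If then g v h else v)
    · intro v hv
      simp only [hv, dif_pos]
      have hv' : v ∈ Sf \ If := by simpa using hv
      rw [dif_pos hv']
      exact Finset.mem_coe.mpr (hg1 v hv')
    · intro a ha b hb hab
      simp only [Finset.mem_coe] at ha hb
      simp only [ha, hb, dif_pos] at hab
      have hgS : g a ha ∈ Sf := hIS (Finset.mem_sdiff.mp (hg1 a ha)).1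
      have h1 : Gb.Adj (g a ha) a := hg2 a ha
      have h2 : Gb.Adj (g a ha) b := hab ▸ hg2 b hb
      exact huniq _ hgS a b h1 h2
  -- hence |S| + |Z| ≤ 4
  have hSZ : Sf.card + Zf.card ≤ 4 := by
    have e1 : (Sf \ If).card + If.card = Sf.card := Finset.card_sdiff_add_card_eq_card hIS
    have e2 : (If \ Zf).card + Zf.card = If.card := Finset.card_sdiff_add_card_eq_card hZI
    omega
  -- degree sum
  have hsum : ∑ v : V, Gb.degree v = 2 * Gb.edgeFinset.card :=
    Gb.sum_degrees_eq_twice_card_edges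
  have hpoint : ∀ v : V, 2 ≤ Gb.degree v + ((if v ∈ Sf then 1 else 0) + (if v ∈ Zf then 1 else 0)) := by
    intro v
    by_cases hS : v ∈ Sf
    · by_cases hZ : v ∈ Zf
      · simp [hS, hZ]
      · have : Gb.degree v ≠ 0 := by
          intro h; exact hZ (by simp [hZf, h])
        simp only [hS, hZ, if_pos, if_neg, not_false_iff]
        omega
    · have : ¬ Gb.degree v ≤ 1 := by
        intro h; exact hS (by simp [hSf, h])
      have hZ : v ∉ Zf := fun h => hS (hZS h)
      simp only [hS, hZ, if_neg, not_false_iff]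
      omega
  have hbig : 2 * Fintype.card V ≤ 2 * Gb.edgeFinset.card + 4 := by
    have h1 : ∑ _v : V, 2 ≤ ∑ v : V, (Gb.degree v + ((if v ∈ Sf then 1 else 0) + (if v ∈ Zf then 1 else 0))) :=
      Finset.sum_le_sum (fun v _ => hpoint v)
    rw [Finset.sum_add_distrib, Finset.sum_add_distrib, hsum] at h1
    have hs1 : ∑ v : V, (if v ∈ Sf then 1 else 0) = Sf.card := by
      rw [Finset.sum_ite_mem, Finset.univ_inter, Finset.sum_const, smul_eq_mul, mul_one]
    have hs2 : ∑ v : V, (if v ∈ Zf then 1 else 0) = Zf.card := by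
      rw [Finset.sum_ite_mem, Finset.univ_inter, Finset.sum_const, smul_eq_mul, mul_one]
    rw [hs1, hs2] at h1
    simp only [Finset.sum_const, Finset.card_univ, smul_eq_mul] at h1
    omega
  have hE : Gb.edgeSet.ncard = Gb.edgeFinset.card := by
    rw [← Set.ncard_coe_finset]
    congr 1
    exact (Gb.coe_edgeFinset).symm
  omega
end

section
/- Let G be a K_3-saturated graph on n ≥ 5 vertices with minimum degree 2. Then e(G) ≥ 2n − 5. -/
open Finset

private lemma common_nbr {V : Type*} [Fintype V] [DecidableEq V]
    (G : SimpleGraph V) [DecidableRel G.Adj]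
    (hfree : G.CliqueFree 3)
    (hsat : ∀ u v : V, u ≠ v → ¬ G.Adj u v →
      ¬ (G ⊔ SimpleGraph.fromEdgeSet {s(u, v)}).CliqueFree 3)
    {u w : V} (huw : u ≠ w) (hna : ¬ G.Adj u w) :
    ∃ z, G.Adj u z ∧ G.Adj w z := by
  have h := hsat u w huw hna
  rw [SimpleGraph.CliqueFree] at h
  push_neg at h
  obtain ⟨t, ht⟩ := h
  obtain ⟨a, b, c, hab, hac, hbc, rfl⟩ := Finset.card_eq_three.mp ht.2
  have hcl := ht.1
  have h1 := hcl (show a ∈ (↑({a,b,c} : Finset V) : Set V) by simp)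
    (show b ∈ (↑({a,b,c} : Finset V) : Set V) by simp) hab
  have h2 := hcl (show a ∈ (↑({a,b,c} : Finset V) : Set V) by simp)
    (show c ∈ (↑({a,b,c} : Finset V) : Set V) by simp) hac
  have h3 := hcl (show b ∈ (↑({a,b,c} : Finset V) : Set V) by simp)
    (show c ∈ (↑({a,b,c} : Finset V) : Set V) by simp) hbc
  simp only [SimpleGraph.sup_adj, SimpleGraph.fromEdgeSet_adj, Set.mem_singleton_iff,
    Sym2.eq_iff] at h1 h2 h3
  have hnot : ¬ (G.Adj a b ∧ G.Adj a c ∧ G.Adj b c) := by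
    rintro ⟨x1, x2, x3⟩
    exact hfree {a,b,c} (SimpleGraph.is3Clique_triple_iff.mpr ⟨x1, x2, x3⟩)
  rcases h1 with h1 | ⟨h1, -⟩
  · rcases h2 with h2 | ⟨h2, -⟩
    · rcases h3 with h3 | ⟨h3, -⟩
      · exact absurd ⟨h1, h2, h3⟩ hnot
      · rcases h3 with ⟨hb, hc⟩ | ⟨hb, hc⟩
        · exact ⟨a, hb ▸ h1.symm, hc ▸ h2.symm⟩
        · exact ⟨a, hc ▸ h2.symm, hb ▸ h1.symm⟩
    · rcases h3 with h3 | ⟨h3, -⟩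
      · rcases h2 with ⟨ha, hc⟩ | ⟨ha, hc⟩
        · exact ⟨b, ha ▸ h1, hc ▸ h3.symm⟩
        · exact ⟨b, hc ▸ h3.symm, ha ▸ h1⟩
      · rcases h2 with ⟨ha, hc⟩ | ⟨ha, hc⟩ <;> rcases h3 with ⟨hb, hc'⟩ | ⟨hb, hc'⟩
        · exact absurd (ha.trans hb.symm) hab
        · exact absurd (hc'.symm.trans hc) huw
        · exact absurd (hc.symm.trans hc') huw
        · exact absurd (ha.trans hb.symm) hab
  · rcases h1 with ⟨ha, hb⟩ | ⟨ha, hb⟩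
    · rcases h2 with h2 | ⟨⟨ha', hc⟩ | ⟨ha', hc⟩, -⟩
      · rcases h3 with h3 | ⟨⟨hb', hc'⟩ | ⟨hb', hc'⟩, -⟩
        · exact ⟨c, ha ▸ h2, hb ▸ h3⟩
        · exact absurd (hb'.symm.trans hb) huw
        · exact absurd (ha.trans hc'.symm) hac
      · exact absurd (hb.trans hc.symm) hbc
      · exact absurd (ha.symm.trans ha') huw
    · rcases h2 with h2 | ⟨⟨ha', hc⟩ | ⟨ha', hc⟩, -⟩
      · rcases h3 with h3 | ⟨⟨hb', hc'⟩ | ⟨hb', hc'⟩, -⟩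
        · exact ⟨c, hb ▸ h3, ha ▸ h2⟩
        · exact absurd (ha.trans hc'.symm) hac
        · exact absurd (hb.symm.trans hb') huw
      · exact absurd (ha'.symm.trans ha) huw
      · exact absurd (hb.trans hc.symm) hbc

/-- A `K₃`-saturated graph on `n ≥ 5` vertices with minimum degree 2 has at least
`2n - 5` edges. -/
theorem K3_saturated_min_degree_two_edges {V : Type*} [Fintype V] [DecidableEq V]
    (G : SimpleGraph V) [DecidableRel G.Adj]
    (hn : 5 ≤ Fintype.card V)
    (hfree : G.CliqueFree 3)
    (hsat : ∀ u v : V, u ≠ v → ¬ G.Adj u v →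
      ¬ (G ⊔ SimpleGraph.fromEdgeSet {s(u, v)}).CliqueFree 3)
    (hmin : ∀ v : V, 2 ≤ G.degree v) (hmin' : ∃ v : V, G.degree v = 2) :
    2 * Fintype.card V - 5 ≤ Set.ncard G.edgeSet := by
  classical
  obtain ⟨v, hv⟩ := hmin'
  have hvcard : (G.neighborFinset v).card = 2 := by
    rw [SimpleGraph.card_neighborFinset_eq_degree]; exact hv
  obtain ⟨x, y, hxy, hN⟩ := Finset.card_eq_two.mp hvcard
  have hvx : G.Adj v x := by rw [← SimpleGraph.mem_neighborFinset, hN]; simp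
  have hvy : G.Adj v y := by rw [← SimpleGraph.mem_neighborFinset, hN]; simp
  have hvnbr : ∀ w, G.Adj v w ↔ (w = x ∨ w = y) := by
    intro w; rw [← SimpleGraph.mem_neighborFinset, hN]; simp
  have htri : ∀ a b c : V, G.Adj a b → G.Adj a c → G.Adj b c → False := by
    intro a b c h1 h2 h3
    exact hfree {a,b,c} (SimpleGraph.is3Clique_triple_iff.mpr ⟨h1, h2, h3⟩)
  have hxyna : ¬ G.Adj x y := fun h => htri v x y hvx hvy h
  set X : Finset V := G.neighborFinset x \ {v} with hX
  set Y : Finset V := G.neighborFinset y \ {v} with hY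
  have hmemX : ∀ w, w ∈ X ↔ G.Adj x w ∧ w ≠ v := by
    intro w; simp [hX, SimpleGraph.mem_neighborFinset]
  have hmemY : ∀ w, w ∈ Y ↔ G.Adj y w ∧ w ≠ v := by
    intro w; simp [hY, SimpleGraph.mem_neighborFinset]
  -- coverage
  have hcov : ∀ w : V, w = v ∨ w = x ∨ w = y ∨ w ∈ X ∨ w ∈ Y := by
    intro w
    by_cases h1 : w = v; · exact Or.inl h1
    by_cases h2 : w = x; · exact Or.inr (Or.inl h2)
    by_cases h3 : w = y; · exact Or.inr (Or.inr (Or.inl h3))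
    have hna : ¬ G.Adj v w := by
      intro h; rcases (hvnbr w).mp h with rfl | rfl
      · exact h2 rfl
      · exact h3 rfl
    obtain ⟨z, hz1, hz2⟩ := common_nbr G hfree hsat (fun h => h1 h.symm) hna
    rcases (hvnbr z).mp hz1 with rfl | rfl
    · exact Or.inr (Or.inr (Or.inr (Or.inl ((hmemX w).mpr ⟨hz2.symm, h1⟩))))
    · exact Or.inr (Or.inr (Or.inr (Or.inr ((hmemY w).mpr ⟨hz2.symm, h1⟩))))
  set P : Finset V := X \ Y with hP
  set Q : Finset V := Y \ X with hQ
  set C : Finset V := X ∩ Y with hC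
  -- P complete to Q
  have hPQ : ∀ u ∈ P, ∀ w ∈ Q, G.Adj u w := by
    intro u hu w hw
    rw [hP, Finset.mem_sdiff] at hu
    rw [hQ, Finset.mem_sdiff] at hw
    obtain ⟨hxu, huv⟩ := (hmemX u).mp hu.1
    obtain ⟨hyw, hwv⟩ := (hmemY w).mp hw.1
    by_contra hnadj
    have huw : u ≠ w := fun h => hw.2 (h ▸ hu.1)
    obtain ⟨z, hz1, hz2⟩ := common_nbr G hfree hsat huw hnadj
    rcases hcov z with rfl | rfl | rfl | hzX | hzY
    · rcases (hvnbr u).mp hz1.symm with heq | heq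
      · exact G.loopless.irrefl x (heq ▸ hxu)
      · exact hxyna (heq ▸ hxu)
    · exact hw.2 ((hmemX w).mpr ⟨hz2.symm, hwv⟩)
    · exact hu.2 ((hmemY u).mpr ⟨hz1.symm, huv⟩)
    · exact htri x u z hxu ((hmemX z).mp hzX).1 hz1
    · exact htri y w z hyw ((hmemY z).mp hzY).1 hz2
  -- Q nonempty → P nonempty
  have hQP : Q.Nonempty → P.Nonempty := by
    rintro ⟨w, hw⟩
    rw [hQ, Finset.mem_sdiff] at hw
    obtain ⟨hyw, hwv⟩ := (hmemY w).mp hw.1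
    have hxwna : ¬ G.Adj x w := fun h => hw.2 ((hmemX w).mpr ⟨h, hwv⟩)
    have hxw : x ≠ w := fun h => hxyna (h.symm ▸ hyw).symm
    obtain ⟨z, hz1, hz2⟩ := common_nbr G hfree hsat hxw hxwna
    have hzv : z ≠ v := by
      rintro rfl
      rcases (hvnbr w).mp hz2.symm with heq | heq
      · exact hxw heq.symm
      · exact G.loopless.irrefl y (heq ▸ hyw)
    have hzX : z ∈ X := (hmemX z).mpr ⟨hz1, hzv⟩
    have hzY : z ∉ Y := by
      intro hzY
      exact htri y z w ((hmemY z).mp hzY).1 hyw hz2.symm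
    exact ⟨z, by rw [hP, Finset.mem_sdiff]; exact ⟨hzX, hzY⟩⟩
  -- P nonempty → Q nonempty
  have hPQ' : P.Nonempty → Q.Nonempty := by
    rintro ⟨u, hu⟩
    rw [hP, Finset.mem_sdiff] at hu
    obtain ⟨hxu, huv⟩ := (hmemX u).mp hu.1
    have hyuna : ¬ G.Adj y u := fun h => hu.2 ((hmemY u).mpr ⟨h, huv⟩)
    have hyu : y ≠ u := fun h => hxyna (h.symm ▸ hxu)
    obtain ⟨z, hz1, hz2⟩ := common_nbr G hfree hsat hyu hyuna
    have hzv : z ≠ v := by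
      rintro rfl
      rcases (hvnbr u).mp hz2.symm with heq | heq
      · exact G.loopless.irrefl x (heq ▸ hxu)
      · exact hyu heq.symm
    have hzY : z ∈ Y := (hmemY z).mpr ⟨hz1, hzv⟩
    have hzX : z ∉ X := by
      intro hzX
      exact htri x z u ((hmemX z).mp hzX).1 hxu hz2.symm
    exact ⟨z, by rw [hQ, Finset.mem_sdiff]; exact ⟨hzY, hzX⟩⟩
  -- basic non-memberships
  have hvX : v ∉ X := by simp [hX]
  have hvY : v ∉ Y := by simp [hY]
  have hxX : x ∉ X := fun h => G.loopless.irrefl x ((hmemX x).mp h).1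
  have hxY : x ∉ Y := fun h => hxyna (((hmemY x).mp h).1).symm
  have hyX : y ∉ X := fun h => hxyna ((hmemX y).mp h).1
  have hyY : y ∉ Y := fun h => G.loopless.irrefl y ((hmemY y).mp h).1
  -- partition of the universe
  have hU : ({v, x, y} : Finset V) ∪ (P ∪ (Q ∪ C)) = Finset.univ := by
    apply Finset.eq_univ_of_forall
    intro w
    rcases hcov w with rfl | rfl | rfl | hw | hw
    · exact Finset.mem_union_left _ (by simp)
    · exact Finset.mem_union_left _ (by simp)
    · exact Finset.mem_union_left _ (by simp)
    · by_cases h : w ∈ Y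
      · refine Finset.mem_union_right _ (Finset.mem_union_right _ (Finset.mem_union_right _ ?_))
        rw [hC]; exact Finset.mem_inter.mpr ⟨hw, h⟩
      · refine Finset.mem_union_right _ (Finset.mem_union_left _ ?_)
        rw [hP]; exact Finset.mem_sdiff.mpr ⟨hw, h⟩
    · by_cases h : w ∈ X
      · refine Finset.mem_union_right _ (Finset.mem_union_right _ (Finset.mem_union_right _ ?_))
        rw [hC]; exact Finset.mem_inter.mpr ⟨h, hw⟩
      · refine Finset.mem_union_right _ (Finset.mem_union_right _ (Finset.mem_union_left _ ?_))
        rw [hQ]; exact Finset.mem_sdiff.mpr ⟨hw, h⟩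
  have hd3 : Disjoint Q C := by
    rw [Finset.disjoint_left]
    intro w hw hw'
    rw [hQ, Finset.mem_sdiff] at hw
    rw [hC, Finset.mem_inter] at hw'
    exact hw.2 hw'.1
  have hd2 : Disjoint P (Q ∪ C) := by
    rw [Finset.disjoint_left]
    intro w hw hw'
    rw [hP, Finset.mem_sdiff] at hw
    rcases Finset.mem_union.mp hw' with h | h
    · exact hw.2 (Finset.mem_sdiff.mp h).1
    · exact hw.2 (Finset.mem_inter.mp h).2
  have hPsubX : P ⊆ X := by rw [hP]; exact Finset.sdiff_subset
  have hQsubY : Q ⊆ Y := by rw [hQ]; exact Finset.sdiff_subset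
  have hCsubX : C ⊆ X := by rw [hC]; exact Finset.inter_subset_left
  have hCsubY : C ⊆ Y := by rw [hC]; exact Finset.inter_subset_right
  have hd1 : Disjoint ({v, x, y} : Finset V) (P ∪ (Q ∪ C)) := by
    rw [Finset.disjoint_left]
    intro w hw hw'
    have hwXY : w ∈ X ∨ w ∈ Y := by
      rcases Finset.mem_union.mp hw' with h | h
      · exact Or.inl (hPsubX h)
      rcases Finset.mem_union.mp h with h | h
      · exact Or.inr (hQsubY h)
      · exact Or.inl (hCsubX h)
    simp only [Finset.mem_insert, Finset.mem_singleton] at hw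
    rcases hw with rfl | rfl | rfl
    · rcases hwXY with h | h; exacts [hvX h, hvY h]
    · rcases hwXY with h | h; exacts [hxX h, hxY h]
    · rcases hwXY with h | h; exacts [hyX h, hyY h]
  -- cardinalities
  have hvne : v ≠ x := hvx.ne
  have hvney : v ≠ y := hvy.ne
  have hScard : ({v, x, y} : Finset V).card = 3 := by
    rw [Finset.card_insert_of_notMem (by simp [hvne, hvney]),
      Finset.card_insert_of_notMem (by simp [hxy]), Finset.card_singleton]
  have hXcard : X.card = P.card + C.card := by
    rw [hP, hC, ← Finset.card_union_of_disjoint (Finset.disjoint_sdiff_inter X Y),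
      Finset.sdiff_union_inter]
  have hYcard : Y.card = Q.card + C.card := by
    rw [hQ, hC, Finset.inter_comm,
      ← Finset.card_union_of_disjoint (Finset.disjoint_sdiff_inter Y X),
      Finset.sdiff_union_inter]
  have hncard : Fintype.card V = 3 + (P.card + (Q.card + C.card)) := by
    rw [← Finset.card_univ, ← hU, Finset.card_union_of_disjoint hd1,
      Finset.card_union_of_disjoint hd2, Finset.card_union_of_disjoint hd3, hScard]
  -- degrees of x and y
  have hdegx : G.degree x = P.card + C.card + 1 := by
    have h1 : v ∈ G.neighborFinset x := by rw [SimpleGraph.mem_neighborFinset]; exact hvx.symm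
    have h2 : X.card = G.degree x - 1 := by
      rw [hX, Finset.sdiff_singleton_eq_erase, Finset.card_erase_of_mem h1,
        SimpleGraph.card_neighborFinset_eq_degree]
    have h3 : 2 ≤ G.degree x := hmin x
    omega
  have hdegy : G.degree y = Q.card + C.card + 1 := by
    have h1 : v ∈ G.neighborFinset y := by rw [SimpleGraph.mem_neighborFinset]; exact hvy.symm
    have h2 : Y.card = G.degree y - 1 := by
      rw [hY, Finset.sdiff_singleton_eq_erase, Finset.card_erase_of_mem h1,
        SimpleGraph.card_neighborFinset_eq_degree]
    have h3 : 2 ≤ G.degree y := hmin y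
    omega
  -- degree bounds on P and Q
  have hdegP : ∀ u ∈ P, Q.card + 1 ≤ G.degree u := by
    intro u hu
    have hxu : G.Adj x u := ((hmemX u).mp (hPsubX hu)).1
    have hsub : insert x Q ⊆ G.neighborFinset u := by
      intro z hz
      rw [SimpleGraph.mem_neighborFinset]
      rcases Finset.mem_insert.mp hz with rfl | hz
      · exact hxu.symm
      · exact hPQ u hu z hz
    calc Q.card + 1 = (insert x Q).card := by
          rw [Finset.card_insert_of_notMem (fun h => hxY (hQsubY h))]
      _ ≤ (G.neighborFinset u).card := Finset.card_le_card hsub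
      _ = G.degree u := SimpleGraph.card_neighborFinset_eq_degree G u
  have hdegQ : ∀ w ∈ Q, P.card + 1 ≤ G.degree w := by
    intro w hw
    have hyw : G.Adj y w := ((hmemY w).mp (hQsubY hw)).1
    have hsub : insert y P ⊆ G.neighborFinset w := by
      intro z hz
      rw [SimpleGraph.mem_neighborFinset]
      rcases Finset.mem_insert.mp hz with rfl | hz
      · exact hyw.symm
      · exact (hPQ z hz w hw).symm
    calc P.card + 1 = (insert y P).card := by
          rw [Finset.card_insert_of_notMem (fun h => hyX (hPsubX h))]
      _ ≤ (G.neighborFinset w).card := Finset.card_le_card hsub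
      _ = G.degree w := SimpleGraph.card_neighborFinset_eq_degree G w
  -- degree sum
  have hsum : ∑ w : V, G.degree w = 2 * G.edgeFinset.card :=
    G.sum_degrees_eq_twice_card_edges
  have hsplit : ∑ w : V, G.degree w =
      (G.degree v + (G.degree x + G.degree y)) +
      ((∑ w ∈ P, G.degree w) + ((∑ w ∈ Q, G.degree w) + (∑ w ∈ C, G.degree w))) := by
    rw [← hU, Finset.sum_union hd1, Finset.sum_union hd2, Finset.sum_union hd3,
      Finset.sum_insert (by simp [hvne, hvney]), Finset.sum_insert (by simp [hxy]),
      Finset.sum_singleton]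
  have hsumP : P.card * (Q.card + 1) ≤ ∑ w ∈ P, G.degree w := by
    calc P.card * (Q.card + 1) = ∑ _w ∈ P, (Q.card + 1) := by
          rw [Finset.sum_const, smul_eq_mul]
      _ ≤ ∑ w ∈ P, G.degree w := Finset.sum_le_sum hdegP
  have hsumQ : Q.card * (P.card + 1) ≤ ∑ w ∈ Q, G.degree w := by
    calc Q.card * (P.card + 1) = ∑ _w ∈ Q, (P.card + 1) := by
          rw [Finset.sum_const, smul_eq_mul]
      _ ≤ ∑ w ∈ Q, G.degree w := Finset.sum_le_sum hdegQ
  have hsumC : C.card * 2 ≤ ∑ w ∈ C, G.degree w := by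
    calc C.card * 2 = ∑ _w ∈ C, 2 := by rw [Finset.sum_const, smul_eq_mul]
      _ ≤ ∑ w ∈ C, G.degree w := Finset.sum_le_sum (fun w _ => hmin w)
  have hE : Set.ncard G.edgeSet = G.edgeFinset.card := by
    rw [← SimpleGraph.coe_edgeFinset, Set.ncard_coe_finset]
  rw [hE]
  -- final arithmetic
  have e1 : P.card * (Q.card + 1) = P.card * Q.card + P.card := by ring
  have e2 : Q.card * (P.card + 1) = P.card * Q.card + Q.card := by ring
  rw [hsplit, hv, hdegx, hdegy] at hsum
  by_cases hp : P.card = 0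
  · have hq : Q.card = 0 := by
      by_contra hq
      obtain ⟨z, hz⟩ := hQP (Finset.card_pos.mp (Nat.pos_of_ne_zero hq))
      have : 0 < P.card := Finset.card_pos.mpr ⟨z, hz⟩
      omega
    have : P.card * Q.card = 0 := by rw [hp]; ring
    omega
  · have hq : Q.card ≠ 0 := by
      intro hq
      obtain ⟨z, hz⟩ := hPQ' (Finset.card_pos.mp (Nat.pos_of_ne_zero hp))
      rw [Finset.card_eq_zero.mp hq] at hz
      exact absurd hz (Finset.notMem_empty z)
    have hkey : P.card + Q.card ≤ P.card * Q.card + 1 := by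
      obtain ⟨p', hp'⟩ : ∃ p', P.card = p' + 1 := ⟨P.card - 1, by omega⟩
      obtain ⟨q', hq'⟩ : ∃ q', Q.card = q' + 1 := ⟨Q.card - 1, by omega⟩
      have hm : P.card * Q.card = p' * q' + p' + q' + 1 := by rw [hp', hq']; ring
      omega
    omega
end

section
/- Let W be a set of (t−1)k vertices inducing a complete graph in G, with a red/blue coloring of the edges inside W such that the blue graph H = G_b[W] is K_{1,k}-free (max degree ≤ k−1) and has independence number at most t−1. Then H is a disjoint union of t−1 cliques, each of size exactly k. -/
/-- If `W` is a set of `(t-1)k` vertices forming a clique in `G`, and the blue graph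
restricted to `W` has maximum degree at most `k-1` and independence number at most `t-1`,
then the blue graph on `W` is a disjoint union of `t-1` cliques, each of size `k`. -/
theorem blue_graph_is_union_of_cliques {V : Type*} [Fintype V] [DecidableEq V]
    (t k : ℕ) (ht : 2 ≤ t) (hk : 1 ≤ k)
    (G Gb : SimpleGraph V) (hb : Gb ≤ G)
    (W : Finset V) (hW : W.card = (t - 1) * k) (hWclique : G.IsClique (W : Set V))
    (hdeg : ∀ v ∈ W, {w : V | w ∈ W ∧ Gb.Adj v w}.ncard ≤ k - 1)
    (hindep : ∀ I : Finset V, I ⊆ W →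
      (I : Set V).Pairwise (fun a b => ¬ Gb.Adj a b) → I.card ≤ t - 1) :
    ∃ P : Fin (t - 1) → Finset V,
      (∀ i, (P i).card = k) ∧
      (∀ i, Gb.IsClique ((P i : Set V))) ∧
      (∀ i j, i ≠ j → Disjoint (P i) (P j)) ∧
      (Finset.univ.biUnion P = W) ∧
      (∀ i j, i ≠ j → ∀ u ∈ P i, ∀ v ∈ P j, ¬ Gb.Adj u v) := by
  classical
  have hsymm : Symmetric fun a b : V => ¬ Gb.Adj a b := fun a b hab h => hab h.symm
  -- choose a maximum independent subset S of W
  obtain ⟨S, hSmem, hSmax⟩ :=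
    Finset.exists_max_image
      (W.powerset.filter fun I : Finset V => (I : Set V).Pairwise fun a b => ¬ Gb.Adj a b)
      (fun I => I.card) ⟨∅, by simp⟩
  rw [Finset.mem_filter, Finset.mem_powerset] at hSmem
  obtain ⟨hSW, hSind⟩ := hSmem
  have hScard_le : S.card ≤ t - 1 := hindep S hSW hSind
  -- every w in W \ S has a blue neighbor in S
  have hnb : ∀ w ∈ W \ S, ∃ s ∈ S, Gb.Adj s w := by
    intro w hw
    rw [Finset.mem_sdiff] at hw
    by_contra h
    push_neg at h
    have hind' : ((insert w S : Finset V) : Set V).Pairwise fun a b => ¬ Gb.Adj a b := by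
      rw [Finset.coe_insert]
      exact (haveI : Std.Symm (fun a b : V => ¬ Gb.Adj a b) := ⟨fun a b h => hsymm h⟩; Set.pairwise_insert_of_symm).mpr
        ⟨hSind, fun s hs _ hadj => h s hs hadj.symm⟩
    have := hSmax (insert w S) (by
      rw [Finset.mem_filter, Finset.mem_powerset]
      exact ⟨Finset.insert_subset hw.1 hSW, hind'⟩)
    rw [Finset.card_insert_of_notMem hw.2] at this
    omega
  -- degree bound as finsets
  have hdegF : ∀ v ∈ W, (W.filter (Gb.Adj v)).card ≤ k - 1 := by
    intro v hv
    have h := hdeg v hv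
    have heq : {w : V | w ∈ W ∧ Gb.Adj v w} = ↑(W.filter (Gb.Adj v)) := by
      ext w; simp [Finset.mem_filter]
    rwa [heq, Set.ncard_coe_finset] at h
  have hNb_le : ∀ s ∈ S, ((W \ S).filter (Gb.Adj s)).card ≤ k - 1 := by
    intro s hs
    refine le_trans (Finset.card_le_card ?_) (hdegF s (hSW hs))
    intro x hx
    rw [Finset.mem_filter] at hx ⊢
    exact ⟨(Finset.mem_sdiff.mp hx.1).1, hx.2⟩
  -- double counting
  have hdouble : ∑ s ∈ S, ((W \ S).filter (Gb.Adj s)).card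
      = ∑ w ∈ W \ S, (S.filter fun s => Gb.Adj s w).card := by
    simp only [Finset.card_filter]
    exact Finset.sum_comm
  have hm_ge : ∀ w ∈ W \ S, 1 ≤ (S.filter fun s => Gb.Adj s w).card := by
    intro w hw
    obtain ⟨s, hs, hadj⟩ := hnb w hw
    exact Finset.card_pos.mpr ⟨s, Finset.mem_filter.mpr ⟨hs, hadj⟩⟩
  have hWS_card : (W \ S).card = (t - 1) * k - S.card := by
    rw [Finset.card_sdiff_of_subset hSW, hW]
  have hSk : S.card ≤ (t - 1) * k := by
    calc S.card ≤ t - 1 := hScard_le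
      _ ≤ (t - 1) * k := Nat.le_mul_of_pos_right _ hk
  -- chain of inequalities
  have hchain1 : (W \ S).card ≤ ∑ w ∈ W \ S, (S.filter fun s => Gb.Adj s w).card := by
    calc (W \ S).card = ∑ _w ∈ W \ S, 1 := by simp
      _ ≤ _ := Finset.sum_le_sum hm_ge
  have hchain2 : ∑ s ∈ S, ((W \ S).filter (Gb.Adj s)).card ≤ S.card * (k - 1) := by
    calc ∑ s ∈ S, ((W \ S).filter (Gb.Adj s)).card ≤ ∑ _s ∈ S, (k - 1) :=
          Finset.sum_le_sum hNb_le
      _ = S.card * (k - 1) := by simp [Finset.sum_const, Nat.smul_one_eq_cast, mul_comm]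
  have hScard : S.card = t - 1 := by
    obtain ⟨m, rfl⟩ : ∃ m, k = m + 1 := ⟨k - 1, by omega⟩
    have h1 : (t - 1) * (m + 1) - S.card ≤ S.card * (m + 1 - 1) := by
      rw [← hWS_card]
      exact le_trans (le_trans hchain1 hdouble.symm.le) hchain2
    simp only [Nat.add_sub_cancel] at h1
    have h2 : (t - 1) * (m + 1) ≤ S.card * (m + 1) := by
      have := Nat.sub_le_iff_le_add.mp h1
      calc (t - 1) * (m + 1) ≤ S.card * m + S.card := this
        _ = S.card * (m + 1) := by ring
    have := Nat.le_of_mul_le_mul_right h2 (by omega)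
    omega
  have hWScard' : (W \ S).card = (t - 1) * (k - 1) := by
    obtain ⟨m, rfl⟩ : ∃ m, k = m + 1 := ⟨k - 1, by omega⟩
    rw [hWS_card, hScard]
    simp only [Nat.add_sub_cancel]
    have : (t - 1) * (m + 1) = (t - 1) * m + (t - 1) := by ring
    omega
  -- equalities forced
  have hsum_eq : ∑ w ∈ W \ S, (S.filter fun s => Gb.Adj s w).card = (W \ S).card := by
    have h1 : ∑ w ∈ W \ S, (S.filter fun s => Gb.Adj s w).card ≤ (W \ S).card := by
      rw [← hdouble, hWScard']
      calc _ ≤ S.card * (k - 1) := hchain2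
        _ = (t - 1) * (k - 1) := by rw [hScard]
    exact le_antisymm h1 hchain1
  -- each w in W \ S has exactly one neighbor in S
  have hm1 : ∀ w ∈ W \ S, (S.filter fun s => Gb.Adj s w).card = 1 := by
    intro w hw
    by_contra hne
    have h2 : 2 ≤ (S.filter fun s => Gb.Adj s w).card := by
      have := hm_ge w hw; omega
    have hrest : ((W \ S).erase w).card ≤ ∑ x ∈ (W \ S).erase w, (S.filter fun s => Gb.Adj s x).card := by
      calc ((W \ S).erase w).card = ∑ _x ∈ (W \ S).erase w, 1 := by simp
        _ ≤ _ := Finset.sum_le_sum fun x hx => hm_ge x (Finset.mem_of_mem_erase hx)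
    have hsplit : (S.filter fun s => Gb.Adj s w).card
        + ∑ x ∈ (W \ S).erase w, (S.filter fun s => Gb.Adj s x).card
        = ∑ x ∈ W \ S, (S.filter fun s => Gb.Adj s x).card :=
      Finset.add_sum_erase (W \ S) (fun x => (S.filter fun s => Gb.Adj s x).card) hw
    have hec : ((W \ S).erase w).card = (W \ S).card - 1 := Finset.card_erase_of_mem hw
    have hpos : 1 ≤ (W \ S).card := Finset.card_pos.mpr ⟨w, hw⟩
    have hse := hsum_eq
    omega
  -- each s in S has exactly k-1 neighbors in W \ S
  have hNbcard : ∀ s ∈ S, ((W \ S).filter (Gb.Adj s)).card = k - 1 := by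
    intro s hs
    by_contra hne
    have hlt : ((W \ S).filter (Gb.Adj s)).card < k - 1 := lt_of_le_of_ne (hNb_le s hs) hne
    have hrest : ∑ x ∈ S.erase s, ((W \ S).filter (Gb.Adj x)).card ≤ (S.erase s).card * (k - 1) := by
      calc ∑ x ∈ S.erase s, ((W \ S).filter (Gb.Adj x)).card
          ≤ ∑ _x ∈ S.erase s, (k - 1) :=
            Finset.sum_le_sum fun x hx => hNb_le x (Finset.mem_of_mem_erase hx)
        _ = (S.erase s).card * (k - 1) := by simp [mul_comm]
    have hsplit : ((W \ S).filter (Gb.Adj s)).card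
        + ∑ x ∈ S.erase s, ((W \ S).filter (Gb.Adj x)).card
        = ∑ x ∈ S, ((W \ S).filter (Gb.Adj x)).card :=
      Finset.add_sum_erase S (fun x => ((W \ S).filter (Gb.Adj x)).card) hs
    have hec : (S.erase s).card = t - 2 := by
      have := Finset.card_erase_of_mem hs
      omega
    have htot : ∑ x ∈ S, ((W \ S).filter (Gb.Adj x)).card = (t - 1) * (k - 1) := by
      rw [hdouble, hsum_eq, hWScard']
    rw [hec] at hrest
    have e0 : t - 1 = (t - 2) + 1 := by omega
    have e1 : (t - 1) * (k - 1) = (t - 2) * (k - 1) + (k - 1) := by rw [e0]; ring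
    omega
  -- uniqueness of the S-neighbor
  have huniq : ∀ w ∈ W \ S, ∀ s ∈ S, ∀ s' ∈ S, Gb.Adj s w → Gb.Adj s' w → s = s' := by
    intro w hw s hs s' hs' h1 h2
    by_contra hne
    have hsub : ({s, s'} : Finset V) ⊆ S.filter fun x => Gb.Adj x w := by
      intro x hx
      rcases Finset.mem_insert.mp hx with rfl | hx
      · exact Finset.mem_filter.mpr ⟨hs, h1⟩
      · rw [Finset.mem_singleton] at hx; subst hx
        exact Finset.mem_filter.mpr ⟨hs', h2⟩
    have h2' := Finset.card_le_card hsub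
    rw [Finset.card_pair hne, hm1 w hw] at h2'
    omega
  -- closed neighborhoods are cliques
  have hclq : ∀ s ∈ S, ∀ u ∈ (W \ S).filter (Gb.Adj s), ∀ w ∈ (W \ S).filter (Gb.Adj s),
      u ≠ w → Gb.Adj u w := by
    intro s hs u hu w hw huw
    by_contra hadj
    rw [Finset.mem_filter] at hu hw
    obtain ⟨huWS, hus⟩ := hu
    obtain ⟨hwWS, hws⟩ := hw
    have huW := (Finset.mem_sdiff.mp huWS).1
    have hwW := (Finset.mem_sdiff.mp hwWS).1
    have huS := (Finset.mem_sdiff.mp huWS).2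
    have hwS := (Finset.mem_sdiff.mp hwWS).2
    have key : ∀ x, x ∈ (insert u (insert w (S.erase s)) : Finset V) →
        x = u ∨ x = w ∨ (x ∈ S ∧ x ≠ s) := by
      intro x hx
      simp only [Finset.mem_insert, Finset.mem_erase] at hx
      tauto
    have hnoadj : ∀ x, (x ∈ S ∧ x ≠ s) → ¬ Gb.Adj x u ∧ ¬ Gb.Adj x w := by
      rintro x ⟨hxS, hxs⟩
      exact ⟨fun h => hxs (huniq u huWS x hxS s hs h hus),
             fun h => hxs (huniq w hwWS x hxS s hs h hws)⟩
    have hIind : ((insert u (insert w (S.erase s)) : Finset V) : Set V).Pairwise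
        fun a b => ¬ Gb.Adj a b := by
      intro a ha b hb hab
      rw [Finset.mem_coe] at ha hb
      rcases key a ha with rfl | rfl | haS <;> rcases key b hb with rfl | rfl | hbS
      · exact absurd rfl hab
      · exact hadj
      · exact fun h => (hnoadj _ hbS).1 h.symm
      · exact fun h => hadj h.symm
      · exact absurd rfl hab
      · exact fun h => (hnoadj _ hbS).2 h.symm
      · exact (hnoadj _ haS).1
      · exact (hnoadj _ haS).2
      · exact hSind (Finset.mem_coe.mpr haS.1) (Finset.mem_coe.mpr hbS.1) hab
    have hIsub : (insert u (insert w (S.erase s)) : Finset V) ⊆ W := by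
      refine Finset.insert_subset huW (Finset.insert_subset hwW ?_)
      exact (Finset.erase_subset s S).trans hSW
    have hIcard : (insert u (insert w (S.erase s)) : Finset V).card = t := by
      have hwne : w ∉ S.erase s := fun h => hwS (Finset.mem_of_mem_erase h)
      have hune : u ∉ insert w (S.erase s) := by
        simp only [Finset.mem_insert]
        rintro (rfl | h)
        · exact huw rfl
        · exact huS (Finset.mem_of_mem_erase h)
      rw [Finset.card_insert_of_notMem hune, Finset.card_insert_of_notMem hwne,
        Finset.card_erase_of_mem hs, hScard]
      omega
    have := hindep _ hIsub hIind
    omega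
  -- enumeration of S
  let σ : Fin (t - 1) → V := fun i => ↑(S.equivFin.symm (Fin.cast hScard.symm i))
  have hσS : ∀ i, σ i ∈ S := fun i => (S.equivFin.symm (Fin.cast hScard.symm i)).2
  have hσinj : Function.Injective σ := by
    intro i j h
    have := Subtype.ext h
    have := S.equivFin.symm.injective this
    exact Fin.cast_injective _ this
  have hσsurj : ∀ s ∈ S, ∃ i, σ i = s := by
    intro s hs
    refine ⟨Fin.cast hScard (S.equivFin ⟨s, hs⟩), ?_⟩
    simp [σ]
  -- the partition
  set P : Fin (t - 1) → Finset V :=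
    fun i => insert (σ i) ((W \ S).filter (Gb.Adj (σ i))) with hPdef
  have hmemP : ∀ i x, x ∈ P i ↔ x = σ i ∨ (x ∈ W \ S ∧ Gb.Adj (σ i) x) := by
    intro i x
    simp [hPdef, Finset.mem_insert, Finset.mem_filter]
  have hPsubW : ∀ i, P i ⊆ W := by
    intro i x hx
    rcases (hmemP i x).mp hx with rfl | ⟨hx1, _⟩
    · exact hSW (hσS i)
    · exact (Finset.mem_sdiff.mp hx1).1
  have hPcard : ∀ i, (P i).card = k := by
    intro i
    have hnm : σ i ∉ (W \ S).filter (Gb.Adj (σ i)) := by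
      intro h
      exact (Finset.mem_sdiff.mp (Finset.mem_filter.mp h).1).2 (hσS i)
    rw [hPdef]
    simp only []
    rw [Finset.card_insert_of_notMem hnm, hNbcard (σ i) (hσS i)]
    omega
  have hPclique : ∀ i, ∀ a ∈ P i, ∀ b ∈ P i, a ≠ b → Gb.Adj a b := by
    intro i a ha b hb hab
    rcases (hmemP i a).mp ha with rfl | ⟨haWS, haAdj⟩ <;>
      rcases (hmemP i b).mp hb with rfl | ⟨hbWS, hbAdj⟩
    · exact absurd rfl hab
    · exact hbAdj
    · exact haAdj.symm
    · exact hclq (σ i) (hσS i) a (Finset.mem_filter.mpr ⟨haWS, haAdj⟩)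
        b (Finset.mem_filter.mpr ⟨hbWS, hbAdj⟩) hab
  have hPdisj : ∀ i j, i ≠ j → Disjoint (P i) (P j) := by
    intro i j hij
    rw [Finset.disjoint_left]
    intro x hxi hxj
    have hσne : σ i ≠ σ j := fun h => hij (hσinj h)
    rcases (hmemP i x).mp hxi with heq1 | ⟨hx1, hadj1⟩
    · rcases (hmemP j x).mp hxj with heq2 | ⟨hx2, _⟩
      · exact hσne (heq1.symm.trans heq2)
      · exact (Finset.mem_sdiff.mp hx2).2 (by rw [heq1]; exact hσS i)
    · rcases (hmemP j x).mp hxj with heq2 | ⟨hx2, hadj2⟩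
      · exact (Finset.mem_sdiff.mp hx1).2 (by rw [heq2]; exact hσS j)
      · exact hσne (huniq x hx1 (σ i) (hσS i) (σ j) (hσS j) hadj1 hadj2)
  refine ⟨P, hPcard, ?_, hPdisj, ?_, ?_⟩
  · -- cliques
    intro i a ha b hb hab
    exact hPclique i a (Finset.mem_coe.mp ha) b (Finset.mem_coe.mp hb) hab
  · -- union
    ext x
    constructor
    · intro hx
      obtain ⟨i, _, hxi⟩ := Finset.mem_biUnion.mp hx
      exact hPsubW i hxi
    · intro hx
      rw [Finset.mem_biUnion]
      by_cases hxS : x ∈ S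
      · obtain ⟨i, hi⟩ := hσsurj x hxS
        exact ⟨i, Finset.mem_univ i, (hmemP i x).mpr (Or.inl hi.symm)⟩
      · have hxWS : x ∈ W \ S := Finset.mem_sdiff.mpr ⟨hx, hxS⟩
        obtain ⟨s, hs, hadj⟩ := hnb x hxWS
        obtain ⟨i, rfl⟩ := hσsurj s hs
        exact ⟨i, Finset.mem_univ i, (hmemP i x).mpr (Or.inr ⟨hxWS, hadj⟩)⟩
  · -- no cross edges
    intro i j hij u hu v hv hadj
    have huW : u ∈ W := hPsubW i hu
    have hvW : v ∈ W := hPsubW j hv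
    have hvP : v ∉ P i := Finset.disjoint_left.mp (hPdisj j i (Ne.symm hij)) hv
    have hsub : insert v ((P i).erase u) ⊆ W.filter (Gb.Adj u) := by
      intro x hx
      rcases Finset.mem_insert.mp hx with rfl | hx
      · exact Finset.mem_filter.mpr ⟨hvW, hadj⟩
      · obtain ⟨hxu, hxP⟩ := Finset.mem_erase.mp hx
        exact Finset.mem_filter.mpr ⟨hPsubW i hxP, hPclique i u hu x hxP (Ne.symm hxu)⟩
    have hvne : v ∉ (P i).erase u := fun h => hvP (Finset.mem_of_mem_erase h)
    have hcard : (insert v ((P i).erase u)).card = k := by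
      rw [Finset.card_insert_of_notMem hvne, Finset.card_erase_of_mem hu, hPcard i]
      omega
    have := Finset.card_le_card hsub
    have hdu := hdegF u huW
    omega
end
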